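/- Let x, y ∈ ℝ², γ > 0. If (θ*, μ*) minimizes F(θ, μ) = (1/2)θ² - θμ·x - γμ·y over θ ≥ 0, |μ| = 1, and θ*x + γy ≠ 0, then μ* = (θ*x + γy)/|θ*x + γy| and θ* = max(0, x·(θ*x + γy)/|θ*x + γy|), i.e., θ* is a fixed point of the iteration map of Algorithm 1. -/

import Mathlib

open RealInnerProductSpace

/-! Fixing `θ = θ*`, the objective is `θ*²/2 - ⟪μ, θ*x + γy⟫`, so `μ*` maximizes a linear
functional on the unit sphere and equality in Cauchy–Schwarz pins it down. Fixing `μ = μ*`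
instead, `θ*` minimizes the quadratic `θ²/2 - θ a` over `θ ≥ 0` with `a = ⟪μ*, x⟫`, whose
minimizer is `max 0 a`. -/

theorem eq_inv_norm_smul_of_isMaxOn_sphere {E : Type*} [NormedAddCommGroup E]
    [InnerProductSpace ℝ E] {w μ : E} (hw : w ≠ 0) (hμ : ‖μ‖ = 1)
    (hmax : IsMaxOn (fun ν => ⟪ν, w⟫) (Metric.sphere 0 1) μ) :
    μ = ‖w‖⁻¹ • w := by
  set u : E := ‖w‖⁻¹ • w
  have hu : ‖u‖ = 1 := norm_smul_inv_norm hw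
  have hwpos : 0 < ‖w‖ := norm_pos_iff.mpr hw
  have hu_w : ⟪u, w⟫ = ‖w‖ := by
    rw [real_inner_smul_left, real_inner_self_eq_norm_sq]
    field_simp
  have hinner : ⟪μ, u⟫ = 1 := by
    refine le_antisymm (real_inner_le_one_of_norm_eq_one hμ hu) ?_
    rw [real_inner_smul_right, le_inv_mul_iff₀ hwpos, mul_one, ← hu_w]
    exact hmax (by simpa using hu)
  exact (inner_eq_one_iff_of_norm_eq_one hμ hu).mp hinner

theorem eq_max_zero_of_isMinOn_Ici {a θ : ℝ} (hθ : 0 ≤ θ)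
    (hmin : IsMinOn (fun t : ℝ => t ^ 2 / 2 - t * a) (Set.Ici 0) θ) :
    θ = max 0 a := by
  have key : θ ^ 2 / 2 - θ * a ≤ (max 0 a) ^ 2 / 2 - max 0 a * a :=
    hmin (Set.mem_Ici.mpr (le_max_left 0 a))
  rcases le_total a 0 with ha | ha
  · rw [max_eq_left ha] at key ⊢
    nlinarith [mul_nonpos_of_nonneg_of_nonpos hθ ha]
  · rw [max_eq_right ha] at key ⊢
    nlinarith [sq_nonneg (θ - a)]

theorem stmt15_general (x y : EuclideanSpace ℝ (Fin 2)) (γ : ℝ)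
    (F : ℝ × EuclideanSpace ℝ (Fin 2) → ℝ)
    (hF : ∀ p, F p = (1 / 2) * p.1 ^ 2 - p.1 * ⟪p.2, x⟫ - γ * ⟪p.2, y⟫)
    (θstar : ℝ) (mustar : EuclideanSpace ℝ (Fin 2))
    (hθ : 0 ≤ θstar) (hμ : ‖mustar‖ = 1)
    (hmin : ∀ θ : ℝ, ∀ μ : EuclideanSpace ℝ (Fin 2), 0 ≤ θ → ‖μ‖ = 1 →
      F (θstar, mustar) ≤ F (θ, μ))
    (hw : θstar • x + γ • y ≠ 0) :
    mustar = ‖θstar • x + γ • y‖⁻¹ • (θstar • x + γ • y) ∧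
    θstar = max 0 (⟪x, θstar • x + γ • y⟫ / ‖θstar • x + γ • y‖) := by
  set w := θstar • x + γ • y
  have hF_w : ∀ μ, F (θstar, μ) = θstar ^ 2 / 2 - ⟪μ, w⟫ := fun μ => by
    rw [hF, inner_add_right, real_inner_smul_right, real_inner_smul_right]
    ring
  have hmu : mustar = ‖w‖⁻¹ • w := by
    refine eq_inv_norm_smul_of_isMaxOn_sphere hw hμ fun ν hν => ?_
    have := hmin θstar ν hθ (by simpa using hν)
    rw [hF_w, hF_w] at this
    exact sub_le_sub_iff_left _ |>.mp this
  refine ⟨hmu, eq_max_zero_of_isMinOn_Ici hθ fun t ht => ?_⟩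
  have hmu_x : ⟪mustar, x⟫ = ⟪x, w⟫ / ‖w‖ := by
    rw [hmu, real_inner_smul_left, real_inner_comm, inv_mul_eq_div]
  have := hmin t mustar ht hμ
  simp only [hF, hmu_x] at this
  show θstar ^ 2 / 2 - θstar * _ ≤ t ^ 2 / 2 - t * _
  linarith

/-- If `(θ*, μ*)` minimizes `F(θ, μ) = (1/2)θ² - θ μ·x - γ μ·y` over `θ ≥ 0`, `‖μ‖ = 1`,
and `θ*x + γy ≠ 0`, then `μ* = (θ*x + γy)/‖θ*x + γy‖` and
`θ* = max(0, x·(θ*x + γy)/‖θ*x + γy‖)` (fixed point of the Algorithm 1 iteration map). -/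
theorem stmt15 (x y : EuclideanSpace ℝ (Fin 2)) (γ : ℝ) (hγ : 0 < γ)
    (F : ℝ × EuclideanSpace ℝ (Fin 2) → ℝ)
    (hF : ∀ p, F p = (1 / 2) * p.1 ^ 2 - p.1 * ⟪p.2, x⟫ - γ * ⟪p.2, y⟫)
    (θstar : ℝ) (mustar : EuclideanSpace ℝ (Fin 2))
    (hθ : 0 ≤ θstar) (hμ : ‖mustar‖ = 1)
    (hmin : ∀ θ : ℝ, ∀ μ : EuclideanSpace ℝ (Fin 2), 0 ≤ θ → ‖μ‖ = 1 →
      F (θstar, mustar) ≤ F (θ, μ))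
    (hw : θstar • x + γ • y ≠ 0) :
    mustar = ‖θstar • x + γ • y‖⁻¹ • (θstar • x + γ • y) ∧
    θstar = max 0 (⟪x, θstar • x + γ • y⟫ / ‖θstar • x + γ • y‖) :=
  stmt15_general x y γ F hF θstar mustar hθ hμ hmin hw
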